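/- Let ρ and p be real numbers. Then the following are equivalent: (i) for every real number α with α² ≥ 1, one has (8π/3)·(α²·(3/2)·(ρ + p) − ρ) ≥ 0; (ii) for every x : Fin 4 → ℝ with η(x,x) < 0, one has 8π(ρ + p)·(x 0)² + 4π(ρ − p)·η(x,x) ≥ 0. (This is the paper's conclusion that for FLRW models, the assumption of everywhere nonpositive timelike sectional curvatures K ≤ 0 is equivalent to the strong energy condition.) -/
import Mathlib


open Real

/-- The Minkowski bilinear form on `ℝ⁴`. -/
def minkowski (x y : Fin 4 → ℝ) : ℝ :=
  -(x 0 * y 0) + x 1 * y 1 + x 2 * y 2 + x 3 * y 3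

lemma aux_i_iff (ρ p : ℝ) :
    (∀ α : ℝ, α ^ 2 ≥ 1 → (8 * π / 3) * (α ^ 2 * (3 / 2) * (ρ + p) - ρ) ≥ 0) ↔
    (ρ + p ≥ 0 ∧ ρ + 3 * p ≥ 0) := by
  constructor
  · intro h
    constructor
    · by_contra hc
      push_neg at hc
      set m : ℝ := max 1 (2 * ρ / (3 * (ρ + p)) + 1) with hm
      have hm1 : (1:ℝ) ≤ m := le_max_left _ _
      have hm0 : (0:ℝ) ≤ m := by linarith
      have hm2 : 2 * ρ / (3 * (ρ + p)) < m := lt_of_lt_of_le (by linarith) (le_max_right _ _)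
      have hsq : (Real.sqrt m) ^ 2 = m := Real.sq_sqrt hm0
      have := h (Real.sqrt m) (by rw [hsq]; exact hm1)
      rw [hsq] at this
      have hkey : m * (3 / 2) * (ρ + p) < ρ := by
        have h3 : 3 * (ρ + p) < 0 := by linarith
        have := (div_lt_iff_of_neg h3).mp hm2
        nlinarith
      nlinarith [pi_pos]
    · have := h 1 (by norm_num)
      nlinarith [pi_pos]
  · rintro ⟨h1, h2⟩ α hα
    nlinarith [pi_pos, mul_nonneg (by linarith : (0:ℝ) ≤ α ^ 2 - 1) h1]

lemma aux_ii_iff (ρ p : ℝ) :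
    (∀ x : Fin 4 → ℝ, minkowski x x < 0 →
      8 * π * (ρ + p) * (x 0) ^ 2 + 4 * π * (ρ - p) * minkowski x x ≥ 0) ↔
    (ρ + p ≥ 0 ∧ ρ + 3 * p ≥ 0) := by
  constructor
  · intro h
    have hbase := h ![1, 0, 0, 0] (by simp [minkowski])
    simp [minkowski] at hbase
    constructor
    · by_contra hc
      push_neg at hc
      set t2 : ℝ := max 1 ((ρ - p) / (2 * (ρ + p)) + 1) with ht2
      have ht1 : (1:ℝ) ≤ t2 := le_max_left _ _
      have ht0 : (0:ℝ) ≤ t2 := by linarith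
      have htgt : (ρ - p) / (2 * (ρ + p)) < t2 := lt_of_lt_of_le (by linarith) (le_max_right _ _)
      set t : ℝ := Real.sqrt t2 with ht
      have htsq : t ^ 2 = t2 := Real.sq_sqrt ht0
      have hs0 : (0:ℝ) ≤ t2 - 1 := by linarith
      set s : ℝ := Real.sqrt (t2 - 1) with hs
      have hssq : s ^ 2 = t2 - 1 := Real.sq_sqrt hs0
      have hmink : minkowski ![t, s, 0, 0] ![t, s, 0, 0] = -1 := by
        simp [minkowski]
        nlinarith
      have := h ![t, s, 0, 0] (by rw [hmink]; norm_num)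
      rw [hmink] at this
      simp at this
      have hkey : 2 * (ρ + p) * t2 < ρ - p := by
        have h2 : 2 * (ρ + p) < 0 := by linarith
        have := (div_lt_iff_of_neg h2).mp htgt
        nlinarith
      rw [htsq] at this
      have h4 : (0:ℝ) < 4 * π := by positivity
      nlinarith [mul_lt_mul_of_pos_left hkey h4]
    · nlinarith [pi_pos]
  · rintro ⟨h1, h2⟩ x hx
    have hx0 : x 0 ^ 2 ≥ -minkowski x x := by
      simp only [minkowski] at *
      nlinarith [sq_nonneg (x 1), sq_nonneg (x 2), sq_nonneg (x 3)]
    nlinarith [pi_pos, mul_nonneg (by linarith : (0:ℝ) ≤ x 0 ^ 2 + minkowski x x) h1,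
      mul_nonneg (by linarith : (0:ℝ) ≤ -minkowski x x) h2]

theorem flrw_nonpos_sect_iff_sec_condition (ρ p : ℝ) :
    (∀ α : ℝ, α ^ 2 ≥ 1 → (8 * π / 3) * (α ^ 2 * (3 / 2) * (ρ + p) - ρ) ≥ 0) ↔
    (∀ x : Fin 4 → ℝ, minkowski x x < 0 →
      8 * π * (ρ + p) * (x 0) ^ 2 + 4 * π * (ρ - p) * minkowski x x ≥ 0) := by
  rw [aux_i_iff, aux_ii_iff]
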